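/- Let U, V, W be open subsets of ℂ, f : U → V and g : V → W biholomorphisms, and let T_V, T_W be integral operators with kernels K_V(w, z), K_W(w, z) satisfying the equivariance K_W(g(w), g(z)) g'(w) g'(z) = K_V(w, z) for all w ≠ z. Then the corresponding operators on one-forms satisfy g^* ∘ T_W = T_V ∘ g^* on compactly supported antiholomorphic one-forms: for ᾱ = conj(h) dz̄ compactly supported in an open Ω ⊆ V, one has g^*(T_W (g^{-1})^* ᾱ) = T_V ᾱ, where (T ᾱ)(z) = ∬ K(w, z) conj(h(w)) dA(w) dz. -/

import Mathlib

/-!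
Substitute `w = g x` in the integral over `g '' Ω`. The real Jacobian of the holomorphic map `g`
is `‖g'‖² = g' · conj g'`, and `conj ((g⁻¹)' (g x)) = (conj (g' x))⁻¹`, so the integrand becomes
`K_W (g x) (g z) · g' x · conj (h x)`; multiplied by `g' z`, the kernel equivariance turns it into
`K_V x z · conj (h x)`. This needs `g' x ≠ 0` and `x ≠ z`, which fail only on a null set: an
injective holomorphic `g` has no open set on which `g'` vanishes, so the zeros of `g'` are isolated.
-/

open MeasureTheory Complex ComplexConjugate Set Filter Topology

theorem Complex.det_restrictScalars_toSpanSingleton (c : ℂ) :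
    ((ContinuousLinearMap.toSpanSingleton ℂ c).restrictScalars ℝ).det = normSq c := by
  rw [ContinuousLinearMap.det, ContinuousLinearMap.coe_restrictScalars,
    LinearMap.det_restrictScalars, ← ContinuousLinearMap.det,
    ContinuousLinearMap.det_toSpanSingleton, Algebra.norm_complex_apply]

theorem integral_image_eq_integral_normSq_deriv_smul {E : Type*} [NormedAddCommGroup E]
    [NormedSpace ℝ E] {s : Set ℂ} {f f' : ℂ → ℂ} (hs : MeasurableSet s)
    (hf' : ∀ x ∈ s, HasDerivWithinAt f (f' x) s x) (hf : InjOn f s) (g : ℂ → E) :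
    ∫ x in f '' s, g x = ∫ x in s, normSq (f' x) • g (f x) := by
  rw [integral_image_eq_integral_abs_det_fderiv_smul volume hs
    (fun x hx ↦ (hf' x hx).hasFDerivWithinAt.restrictScalars ℝ) hf]
  simp only [Complex.det_restrictScalars_toSpanSingleton, abs_of_nonneg (normSq_nonneg _)]

theorem IsOpen.not_eventually_deriv_eq_zero_of_injOn {𝕜 G : Type*} [RCLike 𝕜]
    [NormedAddCommGroup G] [NormedSpace 𝕜 G] {f : 𝕜 → G} {s : Set 𝕜} (hs : IsOpen s)
    (hf : DifferentiableOn 𝕜 f s) (hinj : InjOn f s) {x : 𝕜} (hx : x ∈ s) :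
    ¬ ∀ᶠ y in 𝓝 x, deriv f y = 0 := by
  intro h
  obtain ⟨ε, hε, hball⟩ := Metric.eventually_nhds_iff_ball.1 (h.and (hs.mem_nhds hx))
  obtain ⟨y, hy, hyx⟩ := ((eventually_nhdsWithin_of_eventually_nhds
    (Metric.ball_mem_nhds x hε)).and self_mem_nhdsWithin).exists (f := 𝓝[≠] x)
  have hconst : f y = f x :=
    Metric.isOpen_ball.is_const_of_deriv_eq_zero (convex_ball x ε).isPreconnected
      (hf.mono fun z hz ↦ (hball z hz).2) (fun z hz ↦ (hball z hz).1) hy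
      (Metric.mem_ball_self hε)
  exact hyx (hinj (hball y hy).2 hx hconst)

theorem IsOpen.countable_setOf_deriv_eq_zero_of_injOn {E : Type*} [NormedAddCommGroup E]
    [NormedSpace ℂ E] [CompleteSpace E] {f : ℂ → E} {s : Set ℂ} (hs : IsOpen s)
    (hf : DifferentiableOn ℂ f s) (hinj : InjOn f s) :
    {x ∈ s | deriv f x = 0}.Countable := by
  refine (HereditarilyLindelofSpace.isLindelof _).countable
    (discreteTopology_subtype_iff.mpr fun x hx ↦ ?_)
  rcases ((hf.analyticOnNhd hs).deriv x hx.1).eventually_eq_zero_or_eventually_ne_zero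
    with hzero | hne
  · exact absurd hzero (hs.not_eventually_deriv_eq_zero_of_injOn hf hinj hx.1)
  · exact inf_principal_eq_bot.mpr (hne.mono fun y hy hyZ ↦ hy hyZ.2)

theorem AnalyticAt.deriv_of_eventually_leftInverse {𝕜 : Type*} [NontriviallyNormedField 𝕜]
    [CompleteSpace 𝕜] {f g : 𝕜 → 𝕜} {x : 𝕜} (hf : AnalyticAt 𝕜 f x) (hf' : deriv f x ≠ 0)
    (hfg : ∀ᶠ y in 𝓝 x, g (f y) = y) : deriv g (f x) = (deriv f x)⁻¹ :=
  (hf.hasStrictDerivAt.to_local_left_inverse hf' hfg).hasDerivAt.deriv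

theorem schiffer_operator_conformal_invariance_general
    (V W : Set ℂ) (hV : IsOpen V)
    (g : ℂ → ℂ) (hg : DifferentiableOn ℂ g V) (hgbij : Set.BijOn g V W)
    (ginv : ℂ → ℂ) (hginv : ∀ w ∈ V, ginv (g w) = w)
    (KV KW : ℂ → ℂ → ℂ)
    (hker : ∀ w ∈ V, ∀ z ∈ V, w ≠ z →
      KW (g w) (g z) * deriv g w * deriv g z = KV w z)
    (Ω : Set ℂ) (hΩ : IsOpen Ω) (hΩV : Ω ⊆ V)
    (h : ℂ → ℂ) :
    ∀ z ∈ V,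
      (∫ w in g '' Ω, KW w (g z) * conj (h (ginv w)) * conj (deriv ginv w)) *
          deriv g z =
        ∫ w in Ω, KV w z * conj (h w) := by
  intro z hz
  have hg_deriv : ∀ x ∈ V, HasDerivAt g (deriv g x) x := fun x hx ↦
    ((hg x hx).differentiableAt (hV.mem_nhds hx)).hasDerivAt
  rw [integral_image_eq_integral_normSq_deriv_smul hΩ.measurableSet
    (fun x hx ↦ (hg_deriv x (hΩV hx)).hasDerivWithinAt) (hgbij.injOn.mono hΩV),
    ← integral_mul_const]
  refine setIntegral_congr_ae hΩ.measurableSet ?_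
  filter_upwards [(hV.countable_setOf_deriv_eq_zero_of_injOn hg hgbij.injOn).ae_notMem volume,
    (countable_singleton z).ae_notMem volume] with x hx_regular hxz hxΩ
  have hxV : x ∈ V := hΩV hxΩ
  have hgx : deriv g x ≠ 0 := fun h0 ↦ hx_regular ⟨hxV, h0⟩
  rw [hginv x hxV, ((hg.analyticOnNhd hV) x hxV).deriv_of_eventually_leftInverse hgx
      (eventually_of_mem (hV.mem_nhds hxV) hginv),
    ← hker x hxV z hz hxz, Complex.real_smul, normSq_eq_conj_mul_self, map_inv₀]
  have hgx_conj : conj (deriv g x) ≠ 0 := (map_ne_zero _).mpr hgx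
  field_simp

/-- Conformal invariance of Schiffer-type integral operators: if the kernels
satisfy `K_W(g(w), g(z)) g'(w) g'(z) = K_V(w, z)`, then `g^* ∘ T_W = T_V ∘ g^*`
on compactly supported antiholomorphic one-forms `ᾱ = conj(h) dz̄`. -/
theorem schiffer_operator_conformal_invariance
    (U V W : Set ℂ) (hU : IsOpen U) (hV : IsOpen V) (hW : IsOpen W)
    (f : ℂ → ℂ) (hf : DifferentiableOn ℂ f U) (hfbij : Set.BijOn f U V)
    (g : ℂ → ℂ) (hg : DifferentiableOn ℂ g V) (hgbij : Set.BijOn g V W)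
    (ginv : ℂ → ℂ) (hginv : ∀ w ∈ V, ginv (g w) = w)
    (KV KW : ℂ → ℂ → ℂ)
    (hker : ∀ w ∈ V, ∀ z ∈ V, w ≠ z →
      KW (g w) (g z) * deriv g w * deriv g z = KV w z)
    (Ω : Set ℂ) (hΩ : IsOpen Ω) (hΩV : Ω ⊆ V)
    (h : ℂ → ℂ) (hh : Continuous h) (hsupp : HasCompactSupport h)
    (hsuppΩ : tsupport h ⊆ Ω)
    (hint : ∀ z ∈ V, IntegrableOn (fun w => KV w z * conj (h w)) Ω volume) :
    ∀ z ∈ V,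
      (∫ w in g '' Ω, KW w (g z) * conj (h (ginv w)) * conj (deriv ginv w)) *
          deriv g z =
        ∫ w in Ω, KV w z * conj (h w) :=
  schiffer_operator_conformal_invariance_general V W hV g hg hgbij ginv hginv KV KW hker Ω hΩ hΩV h
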